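/- arXiv:1407.4424 — 6 statements merged into one kernel-verified Lean document; each statement's English description precedes it below -/
import Mathlib

section
/- For every N > 1 there exists a constant C > 0, depending only on N, such that for all a, a' > 0 and all y ∈ ℝ: ∫_ℝ (1 + a|x|)^{−N} (1 + a'|x − y|)^{−N} dx ≤ C · max{a, a'}^{−1} · (1 + min{a, a'}·|y|)^{−N}. -/
/-!
Assume `a ≤ a'` (the substitution `x ↦ y - x` swaps the two factors). If `a|y| ≤ 1`, the
first factor is at most `1 ≤ 2^N (1 + a|y|)^{-N}` and the second integrates to `I / a'`, where
`I = ∫ (1 + |x|)^{-N}`. Otherwise `|x| ≥ |y|/2` or `|x - y| ≥ |y|/2`: in the first case the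
first factor is at most `2^N (1 + a|y|)^{-N}`, in the second the second factor is at most
`(1 + a'|y|/2)^{-N}`, and integrating the other factor gives `I / a'` resp. `I / a`. Because
`N ≥ 1` and `a|y| > 1`, `a⁻¹ (1 + a'|y|/2)^{-N} ≤ 4^N a'⁻¹ (1 + a|y|)^{-N}`.
-/

open MeasureTheory Real

variable {N a a' : ℝ}

lemma integrable_one_add_mul_abs_rpow_neg (hN : 1 < N) (ha : 0 < a) :
    Integrable fun x : ℝ => (1 + a * |x|) ^ (-N) := by
  have h : Integrable fun x : ℝ => (1 + ‖x‖) ^ (-N) :=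
    integrable_one_add_norm (by rwa [Module.finrank_self, Nat.cast_one])
  simpa [abs_mul, abs_of_pos ha] using h.comp_mul_left' ha.ne'

lemma integral_one_add_mul_abs_rpow_neg (ha : 0 < a) :
    ∫ x : ℝ, (1 + a * |x|) ^ (-N) = a⁻¹ * ∫ x : ℝ, (1 + |x|) ^ (-N) := by
  simpa [abs_mul, abs_of_pos ha, abs_of_pos (inv_pos.2 ha)] using
    Measure.integral_comp_mul_left (fun x : ℝ => (1 + |x|) ^ (-N)) a

lemma integral_one_add_abs_rpow_neg_pos (hN : 1 < N) :
    0 < ∫ x : ℝ, (1 + |x|) ^ (-N) := by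
  have hint := integrable_one_add_mul_abs_rpow_neg hN one_pos
  simp only [one_mul] at hint
  rw [integral_pos_iff_support_of_nonneg (fun x => by positivity) hint,
    Function.support_eq_univ fun x => (rpow_pos_of_pos (by positivity) _).ne']
  simp

lemma one_add_mul_abs_rpow_neg_le_one (hN : 0 ≤ N) (ha : 0 ≤ a) (x : ℝ) :
    (1 + a * |x|) ^ (-N) ≤ 1 :=
  rpow_le_one_of_one_le_of_nonpos (by nlinarith [abs_nonneg x]) (by linarith)

lemma integrable_one_add_mul_abs_rpow_neg_mul (hN : 1 < N) (ha : 0 ≤ a) (ha' : 0 < a')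
    (y : ℝ) :
    Integrable fun x : ℝ => (1 + a * |x|) ^ (-N) * (1 + a' * |x - y|) ^ (-N) := by
  refine ((integrable_one_add_mul_abs_rpow_neg hN ha').comp_sub_right y).bdd_mul
    (c := 1) (by fun_prop : Measurable _).aestronglyMeasurable (ae_of_all _ fun x => ?_)
  rw [norm_of_nonneg (by positivity)]
  exact one_add_mul_abs_rpow_neg_le_one (by linarith) ha x

lemma integral_one_add_mul_abs_rpow_neg_mul_comm (a a' y : ℝ) :
    ∫ x : ℝ, (1 + a * |x|) ^ (-N) * (1 + a' * |x - y|) ^ (-N) =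
      ∫ x : ℝ, (1 + a' * |x|) ^ (-N) * (1 + a * |x - y|) ^ (-N) := by
  rw [← integral_sub_left_eq_self _ volume y]
  congr 1
  funext x
  rw [sub_sub_cancel_left, abs_neg, abs_sub_comm, mul_comm]

lemma rpow_neg_le_two_rpow_mul {u v : ℝ} (hu : 0 < u) (huv : u ≤ 2 * v) (hN : 0 ≤ N) :
    v ^ (-N) ≤ 2 ^ N * u ^ (-N) :=
  calc v ^ (-N) ≤ (u / 2) ^ (-N) :=
        rpow_le_rpow_of_nonpos (by positivity) (by linarith) (by linarith)
    _ = 2 ^ N * u ^ (-N) := by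
      rw [div_rpow hu.le zero_le_two, rpow_neg zero_le_two, div_inv_eq_mul, mul_comm]

lemma one_add_mul_abs_rpow_neg_mul_le (hN : 0 ≤ N) (ha : 0 ≤ a) (ha' : 0 ≤ a') (x y : ℝ) :
    (1 + a * |x|) ^ (-N) * (1 + a' * |x - y|) ^ (-N) ≤
      2 ^ N * (1 + a * |y|) ^ (-N) * (1 + a' * |x - y|) ^ (-N) +
        (1 + a * |x|) ^ (-N) * (1 + a' * (|y| / 2)) ^ (-N) := by
  have hf : 0 ≤ (1 + a * |x|) ^ (-N) := by positivity
  have hg : 0 ≤ (1 + a' * |x - y|) ^ (-N) := by positivity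
  have htri : |y| ≤ |x| + |x - y| := by
    linarith [abs_sub_abs_le_abs_sub y x, abs_sub_comm y x]
  rcases le_or_gt (|y| / 2) |x| with hx | hx
  · have hfP : (1 + a * |x|) ^ (-N) ≤ 2 ^ N * (1 + a * |y|) ^ (-N) :=
      rpow_neg_le_two_rpow_mul (by positivity) (by nlinarith) hN
    have : 0 ≤ (1 + a * |x|) ^ (-N) * (1 + a' * (|y| / 2)) ^ (-N) := by positivity
    linarith [mul_le_mul_of_nonneg_right hfP hg]
  · have hgQ : (1 + a' * |x - y|) ^ (-N) ≤ (1 + a' * (|y| / 2)) ^ (-N) :=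
      rpow_le_rpow_of_nonpos (by positivity) (by nlinarith) (by linarith)
    have : 0 ≤ 2 ^ N * (1 + a * |y|) ^ (-N) * (1 + a' * |x - y|) ^ (-N) := by positivity
    linarith [mul_le_mul_of_nonneg_left hgQ hf]

lemma inv_mul_one_add_mul_half_rpow_neg_le (hN : 1 ≤ N) (ha : 0 < a) (hle : a ≤ a') {y : ℝ}
    (hy : 1 < a * |y|) :
    a⁻¹ * (1 + a' * (|y| / 2)) ^ (-N) ≤ 4 ^ N * (a'⁻¹ * (1 + a * |y|) ^ (-N)) := by
  have ha' : 0 < a' := ha.trans_le hle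
  set t := a / a'
  have ht : 0 < t := by positivity
  have hlin : 1 + a * |y| ≤ 4 * t * (1 + a' * (|y| / 2)) := by
    have : 4 * t * (1 + a' * (|y| / 2)) = 4 * t + 2 * (a * |y|) := by
      simp only [t]; field_simp; ring
    rw [this]; linarith
  have hP : (4 * t) ^ (-N) * (1 + a' * (|y| / 2)) ^ (-N) ≤ (1 + a * |y|) ^ (-N) := by
    rw [← mul_rpow (by positivity) (by positivity)]
    exact rpow_le_rpow_of_nonpos (by positivity) hlin (by linarith)
  have ht_inv : t⁻¹ ≤ t ^ (-N) := by
    rw [← rpow_neg_one]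
    exact rpow_le_rpow_of_exponent_ge ht ((div_le_one ha').2 hle) (by linarith)
  have h4 : (4 : ℝ) ^ N * 4 ^ (-N) = 1 := by
    rw [← rpow_add four_pos, add_neg_cancel, rpow_zero]
  calc a⁻¹ * (1 + a' * (|y| / 2)) ^ (-N)
      = a'⁻¹ * t⁻¹ * (1 + a' * (|y| / 2)) ^ (-N) := by simp only [t]; field_simp
    _ ≤ a'⁻¹ * t ^ (-N) * (1 + a' * (|y| / 2)) ^ (-N) := by gcongr
    _ = 4 ^ N * (a'⁻¹ * ((4 * t) ^ (-N) * (1 + a' * (|y| / 2)) ^ (-N))) := by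
      rw [mul_rpow zero_le_four ht.le]
      linear_combination (a'⁻¹ * t ^ (-N) * (1 + a' * (|y| / 2)) ^ (-N)) * h4.symm
    _ ≤ 4 ^ N * (a'⁻¹ * (1 + a * |y|) ^ (-N)) := by gcongr

lemma integral_one_add_mul_abs_rpow_neg_mul_le (hN : 1 < N) (ha : 0 < a) (hle : a ≤ a')
    (y : ℝ) :
    ∫ x : ℝ, (1 + a * |x|) ^ (-N) * (1 + a' * |x - y|) ^ (-N) ≤
      (2 ^ N + 4 ^ N) * (∫ x : ℝ, (1 + |x|) ^ (-N)) * a'⁻¹ * (1 + a * |y|) ^ (-N) := by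
  have ha' : 0 < a' := ha.trans_le hle
  set I := ∫ x : ℝ, (1 + |x|) ^ (-N)
  set P := (1 + a * |y|) ^ (-N)
  have hI : 0 ≤ I := (integral_one_add_abs_rpow_neg_pos hN).le
  have hP : 0 ≤ P := by positivity
  have h4P : 0 ≤ 4 ^ N * I * a'⁻¹ * P := by positivity
  have hf := integrable_one_add_mul_abs_rpow_neg hN ha
  have hg := (integrable_one_add_mul_abs_rpow_neg hN ha').comp_sub_right y
  have hfg := integrable_one_add_mul_abs_rpow_neg_mul hN ha.le ha' y
  have hg_int : ∫ x : ℝ, (1 + a' * |x - y|) ^ (-N) = a'⁻¹ * I := by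
    rw [integral_sub_right_eq_self (fun x : ℝ => (1 + a' * |x|) ^ (-N)) y,
      integral_one_add_mul_abs_rpow_neg ha']
  rcases le_or_gt (a * |y|) 1 with hy | hy
  · have hP_ge : 1 ≤ 2 ^ N * P := by
      simpa using rpow_neg_le_two_rpow_mul (v := 1) (by positivity) (by linarith)
        (by linarith : 0 ≤ N)
    calc ∫ x : ℝ, (1 + a * |x|) ^ (-N) * (1 + a' * |x - y|) ^ (-N)
        ≤ ∫ x : ℝ, (1 + a' * |x - y|) ^ (-N) := integral_mono hfg hg fun x =>
          mul_le_of_le_one_left (by positivity)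
            (one_add_mul_abs_rpow_neg_le_one (by linarith) ha.le x)
      _ = a'⁻¹ * I := hg_int
      _ ≤ (2 ^ N + 4 ^ N) * I * a'⁻¹ * P := by
        nlinarith [mul_le_mul_of_nonneg_left hP_ge (by positivity : 0 ≤ a'⁻¹ * I)]
  · set Q := (1 + a' * (|y| / 2)) ^ (-N)
    have hQ := inv_mul_one_add_mul_half_rpow_neg_le hN.le ha hle hy
    calc ∫ x : ℝ, (1 + a * |x|) ^ (-N) * (1 + a' * |x - y|) ^ (-N)
        ≤ ∫ x : ℝ, 2 ^ N * P * (1 + a' * |x - y|) ^ (-N) + (1 + a * |x|) ^ (-N) * Q :=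
          integral_mono hfg ((hg.const_mul _).add (hf.mul_const _)) fun x =>
            one_add_mul_abs_rpow_neg_mul_le (by linarith) ha.le ha'.le x y
      _ = 2 ^ N * P * (a'⁻¹ * I) + a⁻¹ * Q * I := by
        rw [integral_add (hg.const_mul _) (hf.mul_const _), integral_const_mul,
          integral_mul_const, hg_int, integral_one_add_mul_abs_rpow_neg ha]
        ring
      _ ≤ (2 ^ N + 4 ^ N) * I * a'⁻¹ * P := by
        nlinarith [mul_le_mul_of_nonneg_right hQ hI]

/-- Lemma on convolution-type decay estimates, cf. Grafakos:
for every `N > 1` there is a constant `C > 0` depending only on `N` such that for all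
`a, a' > 0` and `y ∈ ℝ`,
`∫ (1 + a|x|)^{-N} (1 + a'|x-y|)^{-N} dx ≤ C · max{a,a'}⁻¹ · (1 + min{a,a'}|y|)^{-N}`. -/
theorem stmt5 (N : ℝ) (hN : 1 < N) :
    ∃ C > (0 : ℝ), ∀ a a' : ℝ, 0 < a → 0 < a' → ∀ y : ℝ,
      (∫ x : ℝ, (1 + a * |x|) ^ (-N) * (1 + a' * |x - y|) ^ (-N))
        ≤ C * (max a a')⁻¹ * (1 + min a a' * |y|) ^ (-N) := by
  refine ⟨(2 ^ N + 4 ^ N) * ∫ x : ℝ, (1 + |x|) ^ (-N),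
    mul_pos (by positivity) (integral_one_add_abs_rpow_neg_pos hN), fun a a' ha ha' y => ?_⟩
  rcases le_total a a' with hle | hle
  · rw [max_eq_right hle, min_eq_left hle]
    exact integral_one_add_mul_abs_rpow_neg_mul_le hN ha hle y
  · rw [max_eq_left hle, min_eq_right hle, integral_one_add_mul_abs_rpow_neg_mul_comm]
    exact integral_one_add_mul_abs_rpow_neg_mul_le hN ha' hle y
end

section
/- Let α ∈ [0,1] and let M, N₁, N₂, K be nonnegative reals with K ≤ N₂ and K ≤ M. Then there exists a constant C > 0, depending only on K, such that for all s > 0, r ≥ 0 and all φ, θ ∈ ℝ: min{1, s^{−1}(1+r)}^M · (1 + s^{−1}r)^{−N₁} · (1 + s^{−α} r |sin(φ + θ)|)^{−N₂} ≤ C · min{1, s^{−1}(1+r)}^{M−K} · (1 + s^{1−α}|sin(φ + θ)|)^{−K} · (1 + s^{−1}r)^{−N₁}. -/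
open Real Set

/-! The whole estimate reduces to the pointwise bound
`min{1, s⁻¹(1+r)} · (1 + s^{1-α}|sin|) ≤ 2 (1 + s^{-α} r |sin|)`: for `s ≤ 1` the term
`s^{1-α}|sin|` is at most `1`, while for `s > 1` the factor `s⁻¹(1+r)` turns `s^{1-α}` into
`s^{-α}(1+r)` with `s^{-α} ≤ 1`. Raising it to the power `K` and using `K ≤ N₂` trades `K` powers
of the minimum for the angular decay; the remaining factors are carried along unchanged. -/

lemma min_one_mul_rpow_mul_le {α s r u : ℝ} (hα : α ∈ Icc (0 : ℝ) 1) (hs : 0 < s) (hr : 0 ≤ r)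
    (hu₀ : 0 ≤ u) (hu₁ : u ≤ 1) :
    min 1 (s⁻¹ * (1 + r)) * (s ^ (1 - α) * u) ≤ 1 + s ^ (-α) * r * u := by
  have hrest : 0 ≤ s ^ (-α) * r * u := by positivity
  rcases le_or_gt s 1 with hs₁ | hs₁
  · have hsα : s ^ (1 - α) ≤ 1 := rpow_le_one hs.le hs₁ (by linarith [hα.2])
    calc min 1 (s⁻¹ * (1 + r)) * (s ^ (1 - α) * u) ≤ 1 * (1 * 1) := by
          gcongr
          exact min_le_left _ _
      _ ≤ 1 + s ^ (-α) * r * u := by linarith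
  · have hsα : s ^ (-α) ≤ 1 := rpow_le_one_of_one_le_of_nonpos hs₁.le (by linarith [hα.1])
    have hscale : s⁻¹ * s ^ (1 - α) = s ^ (-α) := by
      rw [inv_mul_eq_div, ← rpow_sub_one hs.ne']
      ring_nf
    calc min 1 (s⁻¹ * (1 + r)) * (s ^ (1 - α) * u) ≤ s⁻¹ * (1 + r) * (s ^ (1 - α) * u) := by
          gcongr
          exact min_le_right _ _
      _ = s ^ (-α) * u + s ^ (-α) * r * u := by rw [← hscale]; ring
      _ ≤ 1 + s ^ (-α) * r * u := by gcongr; nlinarith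

lemma min_one_mul_le_two_mul {α s r u : ℝ} (hα : α ∈ Icc (0 : ℝ) 1) (hs : 0 < s) (hr : 0 ≤ r)
    (hu₀ : 0 ≤ u) (hu₁ : u ≤ 1) :
    min 1 (s⁻¹ * (1 + r)) * (1 + s ^ (1 - α) * u) ≤ 2 * (1 + s ^ (-α) * r * u) := by
  have hmin : min 1 (s⁻¹ * (1 + r)) ≤ 1 := min_le_left _ _
  have hrest : 0 ≤ s ^ (-α) * r * u := by positivity
  have := min_one_mul_rpow_mul_le hα hs hr hu₀ hu₁
  linarith

lemma rpow_mul_rpow_neg_le_of_mul_le {m X Y c K N : ℝ} (hm : 0 ≤ m) (hX : 1 ≤ X) (hY : 0 < Y)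
    (h : m * Y ≤ c * X) (hK : 0 ≤ K) (hKN : K ≤ N) :
    m ^ K * X ^ (-N) ≤ c ^ K * Y ^ (-K) := by
  have hX₀ : 0 < X := zero_lt_one.trans_le hX
  have hc : 0 ≤ c := nonneg_of_mul_nonneg_left ((mul_nonneg hm hY.le).trans h) hX₀
  have hpow : m ^ K * Y ^ K ≤ c ^ K * X ^ K := by
    rw [← mul_rpow hm hY.le, ← mul_rpow hc hX₀.le]
    exact rpow_le_rpow (by positivity) h hK
  calc m ^ K * X ^ (-N) ≤ m ^ K * X ^ (-K) := by
        gcongr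
    _ ≤ c ^ K * Y ^ (-K) := by
        rw [rpow_neg hX₀.le, rpow_neg hY.le, ← div_eq_mul_inv, ← div_eq_mul_inv,
          div_le_div_iff₀ (by positivity) (by positivity)]
        exact hpow

/-- decoupling of the angular and radial variables: for every `K ≥ 0`
there exists `C > 0` depending only on `K` such that for all `α ∈ [0,1]`, all nonnegative
reals `M, N₁, N₂` with `K ≤ N₂` and `K ≤ M`, all `s > 0`, `r ≥ 0` and all angles `φ, θ`:
`min{1, s⁻¹(1+r)}^M (1+s⁻¹r)^{-N₁} (1+s^{-α} r |sin(φ+θ)|)^{-N₂}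
  ≤ C · min{1, s⁻¹(1+r)}^{M-K} (1+s^{1-α}|sin(φ+θ)|)^{-K} (1+s⁻¹r)^{-N₁}`. -/
theorem stmt7 (K : ℝ) (hK : 0 ≤ K) :
    ∃ C > (0 : ℝ), ∀ α ∈ Set.Icc (0 : ℝ) 1, ∀ M N₁ N₂ : ℝ,
      0 ≤ M → 0 ≤ N₁ → 0 ≤ N₂ → K ≤ N₂ → K ≤ M →
      ∀ s r φ θ : ℝ, 0 < s → 0 ≤ r →
        (min 1 (s⁻¹ * (1 + r))) ^ M * (1 + s⁻¹ * r) ^ (-N₁)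
            * (1 + s ^ (-α) * r * |Real.sin (φ + θ)|) ^ (-N₂)
          ≤ C * (min 1 (s⁻¹ * (1 + r))) ^ (M - K)
            * (1 + s ^ (1 - α) * |Real.sin (φ + θ)|) ^ (-K) * (1 + s⁻¹ * r) ^ (-N₁) := by
  refine ⟨2 ^ K, by positivity, ?_⟩
  rintro α hα M N₁ N₂ - - - hKN₂ - s r φ θ hs hr
  set u := |Real.sin (φ + θ)|
  set m := min 1 (s⁻¹ * (1 + r))
  have hu₀ : 0 ≤ u := abs_nonneg _
  have hm : 0 < m := lt_min one_pos (by positivity)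
  have hangular : m ^ K * (1 + s ^ (-α) * r * u) ^ (-N₂) ≤ 2 ^ K * (1 + s ^ (1 - α) * u) ^ (-K) :=
    rpow_mul_rpow_neg_le_of_mul_le hm.le (le_add_of_nonneg_right (by positivity)) (by positivity)
      (min_one_mul_le_two_mul hα hs hr hu₀ (abs_sin_le_one _)) hK hKN₂
  calc m ^ M * (1 + s⁻¹ * r) ^ (-N₁) * (1 + s ^ (-α) * r * u) ^ (-N₂)
      = m ^ (M - K) * (1 + s⁻¹ * r) ^ (-N₁) * (m ^ K * (1 + s ^ (-α) * r * u) ^ (-N₂)) := by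
        rw [← sub_add_cancel M K, rpow_add hm, add_sub_cancel_right]
        ring
    _ ≤ m ^ (M - K) * (1 + s⁻¹ * r) ^ (-N₁) * (2 ^ K * (1 + s ^ (1 - α) * u) ^ (-K)) := by
        gcongr
    _ = 2 ^ K * m ^ (M - K) * (1 + s ^ (1 - α) * u) ^ (-K) * (1 + s⁻¹ * r) ^ (-N₁) := by ring
end

section
/- Let α ∈ [0,1], c > 0, A ≥ 1, and let M, N₁ be reals with N₁ ≥ A + (1+α)/2 and M > N₁ − 2. Then there exists a constant C > 0, depending only on α, c, A, M, N₁, such that for all s_μ ≥ s_λ ≥ c: s_μ^{−2} ∫_0^∞ min{1, s_λ^{−1}(1+r)}^M · min{1, s_μ^{−1}(1+r)}^M · (1 + s_λ^{−1}r)^{−N₁} · (1 + s_μ^{−1}r)^{−N₁} · r dr ≤ C · (s_μ/s_λ)^{−(A + (1+α)/2)}. -/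
/-!
Write the integrand as `w s_λ r * w s_μ r * r` with
`w s r = min 1 ((1 + r) / s) ^ M * (1 + r / s) ^ (-N₁)`. Because `s ≥ c`, the factor
`1 + r / s` is comparable to `max 1 ((1 + r) / s)`, so `w s r ≤ C ((1 + r) / s) ^ p` for every
`p ∈ [-N₁, M]`. On `(0, s_μ]` take `p = -N₁` for `s_λ` and `p = M` for `s_μ`: the bound
`(1 + r) ^ (M - N₁ + 1)` integrates to `O(s_μ ^ (M - N₁ + 2))` because `M - N₁ + 2 > 0`.
On `(s_μ, ∞)` take `p = -N₁` for both: `r ^ (1 - 2 N₁)` is integrable there because `N₁ > 1`.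
Both pieces are `O((s_λ / s_μ) ^ N₁ s_μ ^ 2)`, and
`(s_λ / s_μ) ^ N₁ ≤ (s_λ / s_μ) ^ (A + (1 + α) / 2)`.
-/

open MeasureTheory Real Set

noncomputable section

theorem min_one_rpow_mul_max_one_rpow_neg_le {u M N p : ℝ} (hu : 0 < u) (hpN : -N ≤ p)
    (hpM : p ≤ M) : min 1 u ^ M * max 1 u ^ (-N) ≤ u ^ p := by
  rcases le_total u 1 with h | h
  · rw [min_eq_right h, max_eq_left h, one_rpow, mul_one]
    exact rpow_le_rpow_of_exponent_ge hu h hpM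
  · rw [min_eq_left h, max_eq_right h, one_rpow, one_mul]
    exact rpow_le_rpow_of_exponent_le h hpN

theorem one_add_inv_mul_rpow_neg_le {c s r N : ℝ} (hc : 0 < c) (hcs : c ≤ s) (hr : 0 ≤ r)
    (hN : 0 ≤ N) :
    (1 + s⁻¹ * r) ^ (-N) ≤ (1 + c⁻¹) ^ N * max 1 (s⁻¹ * (1 + r)) ^ (-N) := by
  have hs : 0 < s := hc.trans_le hcs
  have hv : 0 ≤ s⁻¹ * r := by positivity
  have hsc : s⁻¹ ≤ c⁻¹ := inv_anti₀ hc hcs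
  have hmax : max 1 (s⁻¹ * (1 + r)) ≤ (1 + c⁻¹) * (1 + s⁻¹ * r) := by
    have : 0 ≤ c⁻¹ := by positivity
    have : 0 ≤ c⁻¹ * (s⁻¹ * r) := by positivity
    refine max_le ?_ ?_ <;> nlinarith
  calc (1 + s⁻¹ * r) ^ (-N) = (1 + c⁻¹) ^ N * ((1 + c⁻¹) * (1 + s⁻¹ * r)) ^ (-N) := by
        rw [mul_rpow (by positivity) (by positivity), ← mul_assoc, ← rpow_add (by positivity),
          add_neg_cancel, rpow_zero, one_mul]
    _ ≤ (1 + c⁻¹) ^ N * max 1 (s⁻¹ * (1 + r)) ^ (-N) :=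
        mul_le_mul_of_nonneg_left
          (rpow_le_rpow_of_nonpos (by positivity) hmax (neg_nonpos.2 hN)) (by positivity)

def radialWeight (M N s r : ℝ) : ℝ := min 1 (s⁻¹ * (1 + r)) ^ M * (1 + s⁻¹ * r) ^ (-N)

theorem radialWeight_nonneg {M N s r : ℝ} (hs : 0 < s) (hr : 0 ≤ r) :
    0 ≤ radialWeight M N s r := by
  unfold radialWeight; positivity

theorem radialWeight_le {c s r M N p : ℝ} (hc : 0 < c) (hcs : c ≤ s) (hr : 0 ≤ r)
    (hN : 0 ≤ N) (hpN : -N ≤ p) (hpM : p ≤ M) :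
    radialWeight M N s r ≤ (1 + c⁻¹) ^ N * s ^ (-p) * (1 + r) ^ p := by
  have hs : 0 < s := hc.trans_le hcs
  have hu : 0 < s⁻¹ * (1 + r) := by positivity
  calc radialWeight M N s r
      ≤ min 1 (s⁻¹ * (1 + r)) ^ M * ((1 + c⁻¹) ^ N * max 1 (s⁻¹ * (1 + r)) ^ (-N)) := by
        unfold radialWeight; gcongr; exact one_add_inv_mul_rpow_neg_le hc hcs hr hN
    _ = (1 + c⁻¹) ^ N * (min 1 (s⁻¹ * (1 + r)) ^ M * max 1 (s⁻¹ * (1 + r)) ^ (-N)) := by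
        ring
    _ ≤ (1 + c⁻¹) ^ N * (s⁻¹ * (1 + r)) ^ p := by
        gcongr; exact min_one_rpow_mul_max_one_rpow_neg_le hu hpN hpM
    _ = (1 + c⁻¹) ^ N * s ^ (-p) * (1 + r) ^ p := by
        rw [mul_rpow (by positivity) (by positivity), inv_rpow hs.le, rpow_neg hs.le, mul_assoc]

theorem setIntegral_Ioi_le_add_of_le {μ : Measure ℝ} {F g h : ℝ → ℝ} {a b : ℝ}
    (hab : a ≤ b) (hF : AEStronglyMeasurable F μ) (hF0 : ∀ r ∈ Ioi a, 0 ≤ F r)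
    (hg : IntegrableOn g (Ioc a b) μ) (hh : IntegrableOn h (Ioi b) μ)
    (hFg : ∀ r ∈ Ioc a b, F r ≤ g r) (hFh : ∀ r ∈ Ioi b, F r ≤ h r) :
    ∫ r in Ioi a, F r ∂μ ≤ (∫ r in Ioc a b, g r ∂μ) + ∫ r in Ioi b, h r ∂μ := by
  have hFg' : IntegrableOn F (Ioc a b) μ :=
    hg.mono' hF.restrict <| (ae_restrict_iff' measurableSet_Ioc).2 <| .of_forall fun r hr => by
      rw [norm_of_nonneg (hF0 r hr.1)]; exact hFg r hr
  have hFh' : IntegrableOn F (Ioi b) μ :=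
    hh.mono' hF.restrict <| (ae_restrict_iff' measurableSet_Ioi).2 <| .of_forall fun r hr => by
      rw [norm_of_nonneg (hF0 r (hab.trans_lt hr))]; exact hFh r hr
  rw [← Ioc_union_Ioi_eq_Ioi hab, setIntegral_union (Ioc_disjoint_Ioi le_rfl) measurableSet_Ioi
    hFg' hFh']
  exact add_le_add (setIntegral_mono_on hFg' hg measurableSet_Ioc hFg)
    (setIntegral_mono_on hFh' hh measurableSet_Ioi hFh)

theorem integrableOn_Ioc_one_add_rpow (a y : ℝ) :
    IntegrableOn (fun r => (1 + r) ^ a) (Ioc 0 y) := by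
  refine (ContinuousOn.integrableOn_Icc ?_).mono_set Ioc_subset_Icc_self
  exact ContinuousOn.rpow_const (by fun_prop) fun r hr => Or.inl (by linarith [hr.1])

theorem integral_Ioc_one_add_rpow_le {a c y : ℝ} (ha : -1 < a) (hc : 0 < c) (hcy : c ≤ y) :
    ∫ r in Ioc 0 y, (1 + r) ^ a ≤ (1 + c⁻¹) ^ (a + 1) * y ^ (a + 1) / (a + 1) := by
  have hy : 0 < y := hc.trans_le hcy
  have ha1 : 0 < a + 1 := by linarith
  have hyB : 1 + y ≤ (1 + c⁻¹) * y := by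
    have : 1 ≤ c⁻¹ * y := by rw [inv_mul_eq_div, one_le_div hc]; exact hcy
    linarith
  rw [← intervalIntegral.integral_of_le hy.le, intervalIntegral.integral_comp_add_left
    (fun t => t ^ a), integral_rpow (Or.inl ha), add_zero, one_rpow,
    ← mul_rpow (by positivity) hy.le]
  gcongr
  calc (1 + y) ^ (a + 1) - 1 ≤ (1 + y) ^ (a + 1) := by linarith
    _ ≤ ((1 + c⁻¹) * y) ^ (a + 1) := by gcongr

def radialIntegrand (M N x y r : ℝ) : ℝ := radialWeight M N x r * radialWeight M N y r * r

theorem radialIntegrand_nonneg {M N x y r : ℝ} (hx : 0 < x) (hy : 0 < y) (hr : 0 ≤ r) :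
    0 ≤ radialIntegrand M N x y r :=
  mul_nonneg (mul_nonneg (radialWeight_nonneg hx hr) (radialWeight_nonneg hy hr)) hr

theorem radialIntegrand_le_one_add_rpow {c x y r M N : ℝ} (hc : 0 < c) (hcx : c ≤ x)
    (hcy : c ≤ y) (hr : 0 ≤ r) (hN : 0 ≤ N) (hMN : -N ≤ M) :
    radialIntegrand M N x y r
      ≤ (1 + c⁻¹) ^ (2 * N) * x ^ N * y ^ (-M) * (1 + r) ^ (M - N + 1) := by
  have hx : 0 < x := hc.trans_le hcx
  have hy : 0 < y := hc.trans_le hcy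
  have h1r : 0 < 1 + r := by linarith
  have hwx := radialWeight_le hc hcx hr hN le_rfl hMN
  have hwy := radialWeight_le hc hcy hr hN hMN le_rfl
  rw [neg_neg] at hwx
  calc radialIntegrand M N x y r
      ≤ ((1 + c⁻¹) ^ N * x ^ N * (1 + r) ^ (-N)) * ((1 + c⁻¹) ^ N * y ^ (-M) * (1 + r) ^ M)
          * (1 + r) := by
        unfold radialIntegrand
        exact mul_le_mul (mul_le_mul hwx hwy (radialWeight_nonneg hy hr)
          (by positivity)) (by linarith) hr (by positivity)
    _ = (1 + c⁻¹) ^ (2 * N) * x ^ N * y ^ (-M) * (1 + r) ^ (M - N + 1) := by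
        rw [two_mul, rpow_add (by positivity), show M - N + 1 = -N + M + 1 by ring,
          rpow_add_one h1r.ne', rpow_add h1r]
        ring

theorem radialIntegrand_le_rpow {c x y r M N : ℝ} (hc : 0 < c) (hcx : c ≤ x) (hcy : c ≤ y)
    (hr : 0 < r) (hN : 0 ≤ N) (hMN : -N ≤ M) :
    radialIntegrand M N x y r ≤ (1 + c⁻¹) ^ (2 * N) * x ^ N * y ^ N * r ^ (1 - 2 * N) := by
  have hx : 0 < x := hc.trans_le hcx
  have hy : 0 < y := hc.trans_le hcy
  have hdecay : (1 + r) ^ (-N) ≤ r ^ (-N) := rpow_le_rpow_of_nonpos hr (by linarith) (by linarith)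
  have hwx := radialWeight_le hc hcx hr.le hN le_rfl hMN
  have hwy := radialWeight_le hc hcy hr.le hN le_rfl hMN
  rw [neg_neg] at hwx hwy
  replace hwx := hwx.trans (mul_le_mul_of_nonneg_left hdecay (by positivity))
  replace hwy := hwy.trans (mul_le_mul_of_nonneg_left hdecay (by positivity))
  calc radialIntegrand M N x y r
      ≤ ((1 + c⁻¹) ^ N * x ^ N * r ^ (-N)) * ((1 + c⁻¹) ^ N * y ^ N * r ^ (-N)) * r := by
        unfold radialIntegrand
        exact mul_le_mul (mul_le_mul hwx hwy (radialWeight_nonneg hy hr.le)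
          (by positivity)) le_rfl hr.le (by positivity)
    _ = (1 + c⁻¹) ^ (2 * N) * x ^ N * y ^ N * r ^ (1 - 2 * N) := by
        rw [show 1 - 2 * N = -N + -N + 1 by ring, two_mul, rpow_add (by positivity),
          rpow_add_one hr.ne', rpow_add hr]
        ring

theorem integral_radialIntegrand_le {c x y M N : ℝ} (hc : 0 < c) (hcx : c ≤ x) (hxy : x ≤ y)
    (hN : 1 < N) (hM : N - 2 < M) :
    ∫ r in Ioi 0, radialIntegrand M N x y r
      ≤ (1 + c⁻¹) ^ (2 * N) * ((1 + c⁻¹) ^ (M - N + 2) / (M - N + 2) + 1 / (2 * N - 2))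
          * (x / y) ^ N * y ^ 2 := by
  have hx : 0 < x := hc.trans_le hcx
  have hy : 0 < y := hx.trans_le hxy
  have hcy : c ≤ y := hcx.trans hxy
  set B := 1 + c⁻¹
  have hN2 : 2 * N - 2 ≠ 0 := by linarith
  have hneg : ∀ t : ℝ, -t / (2 - N - N) = t / (2 * N - 2) := fun t => by
    rw [div_eq_div_iff (by linarith) hN2]; ring
  calc ∫ r in Ioi 0, radialIntegrand M N x y r
      ≤ (∫ r in Ioc 0 y, B ^ (2 * N) * x ^ N * y ^ (-M) * (1 + r) ^ (M - N + 1))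
          + ∫ r in Ioi y, B ^ (2 * N) * x ^ N * y ^ N * r ^ (1 - 2 * N) :=
        setIntegral_Ioi_le_add_of_le hy.le (by unfold radialIntegrand radialWeight; fun_prop)
          (fun r hr => radialIntegrand_nonneg hx hy (le_of_lt hr))
          ((integrableOn_Ioc_one_add_rpow _ _).const_mul _)
          ((integrableOn_Ioi_rpow_of_lt (by linarith) hy).const_mul _)
          (fun r hr => radialIntegrand_le_one_add_rpow hc hcx hcy hr.1.le (by linarith)
            (by linarith))
          (fun r hr => radialIntegrand_le_rpow hc hcx hcy (hy.trans hr) (by linarith)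
            (by linarith))
    _ ≤ B ^ (2 * N) * x ^ N * y ^ (-M)
            * (B ^ (M - N + 1 + 1) * y ^ (M - N + 1 + 1) / (M - N + 1 + 1))
          + B ^ (2 * N) * x ^ N * y ^ N * (-y ^ (1 - 2 * N + 1) / (1 - 2 * N + 1)) := by
        rw [integral_const_mul, integral_const_mul, integral_Ioi_rpow_of_lt (by linarith) hy]
        gcongr
        exact integral_Ioc_one_add_rpow_le (by linarith) hc hcy
    _ = B ^ (2 * N) * (B ^ (M - N + 2) / (M - N + 2) + 1 / (2 * N - 2)) * (x / y) ^ N * y ^ 2 := by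
        rw [show M - N + 1 + 1 = M - N + 2 by ring, show 1 - 2 * N + 1 = 2 - N - N by ring,
          rpow_add hy, rpow_sub hy, rpow_sub hy, rpow_sub hy, rpow_neg hy.le, rpow_two,
          div_rpow hx.le hy.le, hneg]
        field_simp

/-- radial estimate: let `α ∈ [0,1]`, `c > 0`, `A ≥ 1`, and reals
`M, N₁` with `N₁ ≥ A + (1+α)/2` and `M > N₁ − 2`. Then there is `C > 0` depending only on
`α, c, A, M, N₁` such that for all `s_μ ≥ s_λ ≥ c`:
`s_μ^{-2} ∫₀^∞ min{1, s_λ^{-1}(1+r)}^M min{1, s_μ^{-1}(1+r)}^M (1+s_λ^{-1}r)^{-N₁}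
  (1+s_μ^{-1}r)^{-N₁} r dr ≤ C (s_μ/s_λ)^{-(A+(1+α)/2)}`. -/
theorem stmt9 (α c A M N₁ : ℝ) (hα : α ∈ Set.Icc (0 : ℝ) 1) (hc : 0 < c) (hA : 1 ≤ A)
    (hN₁ : A + (1 + α) / 2 ≤ N₁) (hM : N₁ - 2 < M) :
    ∃ C > (0 : ℝ), ∀ sl sm : ℝ, c ≤ sl → sl ≤ sm →
      sm ^ (-2 : ℝ) *
          (∫ r in Set.Ioi (0 : ℝ),
            (min 1 (sl⁻¹ * (1 + r))) ^ M * (min 1 (sm⁻¹ * (1 + r))) ^ M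
              * (1 + sl⁻¹ * r) ^ (-N₁) * (1 + sm⁻¹ * r) ^ (-N₁) * r)
        ≤ C * (sm / sl) ^ (-(A + (1 + α) / 2)) := by
  have hN : 1 < N₁ := by linarith [hα.1]
  set C :=
    (1 + c⁻¹) ^ (2 * N₁) * ((1 + c⁻¹) ^ (M - N₁ + 2) / (M - N₁ + 2) + 1 / (2 * N₁ - 2))
  have hC : 0 < C := by
    have : 0 < M - N₁ + 2 := by linarith
    have : 0 < 2 * N₁ - 2 := by linarith
    positivity
  refine ⟨C, hC, fun sl sm hsl hslm => ?_⟩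
  have hl : 0 < sl := hc.trans_le hsl
  have hm : 0 < sm := hl.trans_le hslm
  calc _ = sm ^ (-2 : ℝ) * ∫ r in Ioi 0, radialIntegrand M N₁ sl sm r := by
        congr 2 with r; unfold radialIntegrand radialWeight; ring
    _ ≤ sm ^ (-2 : ℝ) * (C * (sl / sm) ^ N₁ * sm ^ 2) := by
        gcongr
        exact integral_radialIntegrand_le hc hsl hslm hN hM
    _ = C * (sl / sm) ^ N₁ := by rw [rpow_neg hm.le, rpow_two]; field_simp
    _ ≤ C * (sm / sl) ^ (-(A + (1 + α) / 2)) := by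
        rw [rpow_neg (by positivity), ← inv_rpow (by positivity), inv_div]
        exact mul_le_mul_of_nonneg_left
          (rpow_le_rpow_of_exponent_ge (by positivity) ((div_le_one hm).2 hslm) hN₁) hC.le

end
end

section
/- Let Λ and Δ be countable index sets, let p > 0 and set q := min{1, p}. Let (A_{λ,μ})_{λ∈Λ, μ∈Δ} be a complex matrix with K := max{ sup_{λ∈Λ} Σ_{μ∈Δ} |A_{λ,μ}|^q , sup_{μ∈Δ} Σ_{λ∈Λ} |A_{λ,μ}|^q } < ∞. Then for every (c_λ) ∈ ℓ^p(Λ), the series Σ_{λ∈Λ} A_{λ,μ} c_λ converges absolutely for each μ ∈ Δ, and the resulting sequence satisfies Σ_{μ∈Δ} |Σ_{λ∈Λ} A_{λ,μ} c_λ|^p ≤ K^{p/q} · Σ_{λ∈Λ} |c_λ|^p. -/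
/-!
All estimates are done in `ℝ≥0∞` with `‖A l μ‖ₑ` and `‖c l‖ₑ`, where every series has a sum, and
only afterwards transferred back to `ℝ`: finiteness of the final bound gives all the summability
claims. For `p ≤ 1`, subadditivity of `t ↦ t ^ p` gives `(Σ_λ |A c|) ^ p ≤ Σ_λ |A| ^ p |c| ^ p`, and
summing over `μ` the row bound yields `K Σ |c| ^ p`. For `p > 1`, Hölder's inequality with weights
`|A_{λ,μ}|` gives `(Σ_λ |A c|) ^ p ≤ (Σ_λ |A| |c| ^ p) (Σ_λ |A|) ^ (p - 1)`; the column bound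
controls the last factor by `K ^ (p - 1)` and the row bound contributes one more `K` after summing
over `μ`.
-/

open scoped ENNReal

namespace ENNReal

variable {ι κ : Type*}

theorem rpow_tsum_le_tsum_rpow {p : ℝ} (hp : 0 < p) (hp1 : p ≤ 1) (f : ι → ℝ≥0∞) :
    (∑' i, f i) ^ p ≤ ∑' i, f i ^ p := by
  rw [ENNReal.tsum_eq_iSup_sum, Monotone.map_ciSup_of_continuousAt
    continuous_rpow_const.continuousAt fun x y h => rpow_le_rpow h hp.le]
  refine iSup_le fun s => ?_
  calc (∑ i ∈ s, f i) ^ p ≤ ∑ i ∈ s, f i ^ p :=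
        Finset.le_sum_of_subadditive (· ^ p) (zero_rpow_of_pos hp).le
          (fun x y => rpow_add_le_add_rpow x y hp.le hp1) s f
    _ ≤ ∑' i, f i ^ p := ENNReal.sum_le_tsum s

theorem inner_le_Lp_mul_Lq_tsum {p q : ℝ} (hpq : p.HolderConjugate q) (f g : ι → ℝ≥0∞) :
    ∑' i, f i * g i ≤ (∑' i, f i ^ p) ^ (1 / p) * (∑' i, g i ^ q) ^ (1 / q) := by
  let _ : MeasurableSpace ι := ⊤
  have : MeasurableSingletonClass ι := ⟨fun _ => trivial⟩
  simpa [MeasureTheory.lintegral_count] using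
    lintegral_mul_le_Lp_mul_Lq (MeasureTheory.Measure.count : MeasureTheory.Measure ι) hpq
      (measurable_from_top (f := f)).aemeasurable (measurable_from_top (f := g)).aemeasurable

theorem rpow_tsum_mul_le_tsum_mul_rpow_mul_tsum_rpow {p : ℝ} (hp : 1 < p) (a b : ι → ℝ≥0∞) :
    (∑' i, a i * b i) ^ p ≤ (∑' i, a i * b i ^ p) * (∑' i, a i) ^ (p - 1) := by
  set r := p.conjExponent
  have hpr : p.HolderConjugate r := .conjExponent hp
  have hsplit : ∀ i, a i * b i = a i ^ (1 / p) * b i * a i ^ (1 / r) := fun i => by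
    rw [mul_right_comm, ← rpow_add_of_nonneg _ _ hpr.one_div_nonneg hpr.symm.one_div_nonneg,
      hpr.one_div_add_one_div, one_div_one, rpow_one]
  have hfirst : ∀ i, (a i ^ (1 / p) * b i) ^ p = a i * b i ^ p := fun i => by
    rw [mul_rpow_of_nonneg _ _ hpr.nonneg, ← rpow_mul, one_div_mul_cancel hpr.ne_zero,
      rpow_one]
  have hsecond : ∀ i, (a i ^ (1 / r)) ^ r = a i := fun i => by
    rw [← rpow_mul, one_div_mul_cancel hpr.symm.ne_zero, rpow_one]
  calc (∑' i, a i * b i) ^ p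
      ≤ ((∑' i, (a i ^ (1 / p) * b i) ^ p) ^ (1 / p) *
          (∑' i, (a i ^ (1 / r)) ^ r) ^ (1 / r)) ^ p := by
        rw [tsum_congr hsplit]
        exact rpow_le_rpow (inner_le_Lp_mul_Lq_tsum hpr _ _) hpr.nonneg
    _ = (∑' i, a i * b i ^ p) * (∑' i, a i) ^ (p - 1) := by
        rw [tsum_congr hfirst, tsum_congr hsecond, mul_rpow_of_nonneg _ _ hpr.nonneg,
          ← rpow_mul, ← rpow_mul, one_div_mul_cancel hpr.ne_zero, rpow_one,
          one_div_mul_eq_div, hpr.div_conj_eq_sub_one]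

variable {a : ι → κ → ℝ≥0∞} {K : ℝ≥0∞}

theorem tsum_tsum_mul_le_mul_tsum (hrow : ∀ i, ∑' j, a i j ≤ K) (b : ι → ℝ≥0∞) :
    ∑' j, ∑' i, a i j * b i ≤ K * ∑' i, b i := by
  rw [ENNReal.tsum_comm]
  calc ∑' i, ∑' j, a i j * b i = ∑' i, (∑' j, a i j) * b i := by simp_rw [ENNReal.tsum_mul_right]
    _ ≤ ∑' i, K * b i := ENNReal.tsum_le_tsum fun i => mul_le_mul_left (hrow i) _
    _ = K * ∑' i, b i := ENNReal.tsum_mul_left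

theorem tsum_rpow_tsum_mul_le_of_le_one {p : ℝ} (hp : 0 < p) (hp1 : p ≤ 1)
    (hrow : ∀ i, ∑' j, a i j ^ p ≤ K) (b : ι → ℝ≥0∞) :
    ∑' j, (∑' i, a i j * b i) ^ p ≤ K * ∑' i, b i ^ p :=
  calc ∑' j, (∑' i, a i j * b i) ^ p ≤ ∑' j, ∑' i, a i j ^ p * b i ^ p :=
        ENNReal.tsum_le_tsum fun j => (rpow_tsum_le_tsum_rpow hp hp1 _).trans_eq <| by
          simp_rw [mul_rpow_of_nonneg _ _ hp.le]
    _ ≤ K * ∑' i, b i ^ p := tsum_tsum_mul_le_mul_tsum hrow _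

theorem tsum_rpow_tsum_mul_le_of_one_lt {p : ℝ} (hp : 1 < p) (hrow : ∀ i, ∑' j, a i j ≤ K)
    (hcol : ∀ j, ∑' i, a i j ≤ K) (b : ι → ℝ≥0∞) :
    ∑' j, (∑' i, a i j * b i) ^ p ≤ K ^ p * ∑' i, b i ^ p :=
  calc ∑' j, (∑' i, a i j * b i) ^ p ≤ ∑' j, (∑' i, a i j * b i ^ p) * K ^ (p - 1) :=
        ENNReal.tsum_le_tsum fun j =>
          (rpow_tsum_mul_le_tsum_mul_rpow_mul_tsum_rpow hp _ _).trans (by gcongr; exact hcol j)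
    _ ≤ K * (∑' i, b i ^ p) * K ^ (p - 1) := by
        rw [ENNReal.tsum_mul_right]
        gcongr
        exact tsum_tsum_mul_le_mul_tsum hrow _
    _ = K ^ p * ∑' i, b i ^ p := by
        have hK : K * K ^ (p - 1) = K ^ p := by
          simpa using (rpow_add_of_nonneg (x := K) 1 (p - 1) zero_le_one (by linarith)).symm
        rw [mul_right_comm, hK]

theorem tsum_rpow_tsum_mul_le {p : ℝ} (hp : 0 < p) (hrow : ∀ i, ∑' j, a i j ^ min 1 p ≤ K)
    (hcol : ∀ j, ∑' i, a i j ^ min 1 p ≤ K) (b : ι → ℝ≥0∞) :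
    ∑' j, (∑' i, a i j * b i) ^ p ≤ K ^ (p / min 1 p) * ∑' i, b i ^ p := by
  rcases le_or_gt p 1 with hp1 | hp1
  · rw [min_eq_right hp1] at hrow
    rw [min_eq_right hp1, div_self hp.ne', rpow_one]
    exact tsum_rpow_tsum_mul_le_of_le_one hp hp1 hrow b
  · simp only [min_eq_left hp1.le, rpow_one, div_one] at hrow hcol ⊢
    exact tsum_rpow_tsum_mul_le_of_one_lt hp1 hrow hcol b

end ENNReal

section Norm

variable {ι E : Type*} [SeminormedAddGroup E] {r : ℝ}

theorem tsum_norm_rpow_eq_toReal_tsum_enorm_rpow (hr : 0 ≤ r) (f : ι → E) :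
    ∑' i, ‖f i‖ ^ r = (∑' i, ‖f i‖ₑ ^ r).toReal := by
  rw [ENNReal.tsum_toReal_eq fun i => ENNReal.rpow_ne_top_of_nonneg hr enorm_ne_top]
  simp [← ENNReal.toReal_rpow]

theorem tsum_enorm_rpow_ne_top_iff_summable (hr : 0 ≤ r) {f : ι → E} :
    ∑' i, ‖f i‖ₑ ^ r ≠ ⊤ ↔ Summable fun i => ‖f i‖ ^ r := by
  have henorm : ∀ i, ‖‖f i‖ ^ r‖ₑ = ‖f i‖ₑ ^ r := fun i => by
    rw [Real.enorm_eq_ofReal (by positivity), ← ENNReal.ofReal_rpow_of_nonneg (norm_nonneg _) hr,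
      ofReal_norm]
  simpa only [henorm, Real.norm_of_nonneg (Real.rpow_nonneg (norm_nonneg _) r)] using
    tsum_enorm_ne_top_iff_summable_norm (f := fun i => ‖f i‖ ^ r)

theorem tsum_enorm_rpow_le_ofReal (hr : 0 ≤ r) {f : ι → E} {K : ℝ}
    (hf : Summable fun i => ‖f i‖ ^ r) (hK : ∑' i, ‖f i‖ ^ r ≤ K) :
    ∑' i, ‖f i‖ₑ ^ r ≤ ENNReal.ofReal K := by
  rw [← ENNReal.ofReal_toReal ((tsum_enorm_rpow_ne_top_iff_summable hr).2 hf),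
    ← tsum_norm_rpow_eq_toReal_tsum_enorm_rpow hr]
  exact ENNReal.ofReal_le_ofReal hK

end Norm

theorem stmt12_general (Λ Δ : Type*) (p : ℝ) (hp : 0 < p)
    (A : Λ → Δ → ℂ) (K : ℝ)
    (hrow : ∀ l : Λ, Summable (fun μ : Δ => ‖A l μ‖ ^ min 1 p) ∧
      (∑' μ : Δ, ‖A l μ‖ ^ min 1 p) ≤ K)
    (hcol : ∀ μ : Δ, Summable (fun l : Λ => ‖A l μ‖ ^ min 1 p) ∧
      (∑' l : Λ, ‖A l μ‖ ^ min 1 p) ≤ K)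
    (c : Λ → ℂ) (hc : Summable (fun l : Λ => ‖c l‖ ^ p)) :
    (∀ μ : Δ, Summable (fun l : Λ => ‖A l μ * c l‖)) ∧
    Summable (fun μ : Δ => ‖∑' l : Λ, A l μ * c l‖ ^ p) ∧
    (∑' μ : Δ, ‖∑' l : Λ, A l μ * c l‖ ^ p) ≤ K ^ (p / min 1 p) * ∑' l : Λ, ‖c l‖ ^ p := by
  -- for empty `Λ` nothing forces `0 ≤ K`, and `K ^ (p / min 1 p)` is junk for `K < 0`
  rcases isEmpty_or_nonempty Λ with hΛ | hΛ
  · simp [Real.zero_rpow hp.ne']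
  have hK : 0 ≤ K := (tsum_nonneg fun μ => by positivity).trans (hrow hΛ.some).2
  have hq : 0 ≤ min 1 p := le_min zero_le_one hp.le
  have hschur := ENNReal.tsum_rpow_tsum_mul_le hp
    (fun l => tsum_enorm_rpow_le_ofReal hq (hrow l).1 (hrow l).2)
    (fun μ => tsum_enorm_rpow_le_ofReal hq (hcol μ).1 (hcol μ).2) (fun l => ‖c l‖ₑ)
  simp_rw [← enorm_mul] at hschur
  have hbound_ne_top : ENNReal.ofReal K ^ (p / min 1 p) * ∑' l, ‖c l‖ₑ ^ p ≠ ⊤ :=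
    ENNReal.mul_ne_top (ENNReal.rpow_ne_top_of_nonneg (by positivity) ENNReal.ofReal_ne_top)
      ((tsum_enorm_rpow_ne_top_iff_summable hp.le).2 hc)
  have hrow_ne_top : ∀ μ, ∑' l, ‖A l μ * c l‖ₑ ≠ ⊤ := fun μ =>
    ((ENNReal.rpow_lt_top_iff_of_pos hp).1
      (((ENNReal.le_tsum μ).trans hschur).trans_lt hbound_ne_top.lt_top)).ne
  have hLHS :
      ∑' μ, ‖∑' l, A l μ * c l‖ₑ ^ p ≤ ENNReal.ofReal K ^ (p / min 1 p) * ∑' l, ‖c l‖ₑ ^ p :=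
    (ENNReal.tsum_le_tsum fun μ => ENNReal.rpow_le_rpow enorm_tsum_le_tsum_enorm hp.le).trans hschur
  refine ⟨fun μ => tsum_enorm_ne_top_iff_summable_norm.1 (hrow_ne_top μ),
    (tsum_enorm_rpow_ne_top_iff_summable hp.le).1 (ne_top_of_le_ne_top hbound_ne_top hLHS), ?_⟩
  simp only [tsum_norm_rpow_eq_toReal_tsum_enorm_rpow hp.le]
  refine (ENNReal.toReal_mono hbound_ne_top hLHS).trans_eq ?_
  rw [ENNReal.toReal_mul, ← ENNReal.toReal_rpow, ENNReal.toReal_ofReal hK]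

/-- Lemma 4.5, Schur-type bound for matrices on `ℓ^p`: if
`K := max{sup_λ Σ_μ |A_{λ,μ}|^q, sup_μ Σ_λ |A_{λ,μ}|^q} < ∞` with `q = min{1,p}`, then
for every `(c_λ) ∈ ℓ^p` the series `Σ_λ A_{λ,μ} c_λ` converges absolutely for each `μ`
and `Σ_μ |Σ_λ A_{λ,μ} c_λ|^p ≤ K^{p/q} Σ_λ |c_λ|^p`. -/
theorem stmt12 (Λ Δ : Type*) [Countable Λ] [Countable Δ] (p : ℝ) (hp : 0 < p)
    (A : Λ → Δ → ℂ) (K : ℝ)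
    (hrow : ∀ l : Λ, Summable (fun μ : Δ => ‖A l μ‖ ^ min 1 p) ∧
      (∑' μ : Δ, ‖A l μ‖ ^ min 1 p) ≤ K)
    (hcol : ∀ μ : Δ, Summable (fun l : Λ => ‖A l μ‖ ^ min 1 p) ∧
      (∑' l : Λ, ‖A l μ‖ ^ min 1 p) ≤ K)
    (c : Λ → ℂ) (hc : Summable (fun l : Λ => ‖c l‖ ^ p)) :
    (∀ μ : Δ, Summable (fun l : Λ => ‖A l μ * c l‖)) ∧
    Summable (fun μ : Δ => ‖∑' l : Λ, A l μ * c l‖ ^ p) ∧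
    (∑' μ : Δ, ‖∑' l : Λ, A l μ * c l‖ ^ p) ≤ K ^ (p / min 1 p) * ∑' l : Λ, ‖c l‖ ^ p :=
  stmt12_general Λ Δ p hp A K hrow hcol c hc
end

section
/- Let L ∈ ℕ₀, let 0 < a, 0 < b < c, and let φ⁰, φ¹ ∈ L²(ℝ) be such that their Fourier transforms satisfy φ̂⁰, φ̂¹ ∈ C^L(ℝ), supp φ̂⁰ ⊆ [−a, a] and supp φ̂¹ ⊆ [−c, c] \ (−b, b). For e = (e₁, e₂) ∈ {0,1}² let ψ^e := φ^{e₁} ⊗ φ^{e₂} ∈ L²(ℝ²). Then for every choice of M, N₁, N₂ ∈ ℕ₀ there exists a constant C > 0 such that for every e ∈ {0,1}² with e ≠ (0,0), every j ∈ ℕ₀, every multi-index ρ with |ρ| ≤ L, and every ξ ∈ ℝ²: |∂^ρ ψ̂^e(ξ)| ≤ C · min{1, σ^{−j} + |ξ₁| + |ξ₂|}^M · ⟨|ξ|⟩^{−N₁} · ⟨ξ₂⟩^{−N₂} for every σ > 1; and for e = (0,0) the same bound holds with j = 0. (In other words, the wavelet system W(φ⁰, φ¹; σ, τ) is a system of 1-molecules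 of order (L, ∞, ∞, ∞) with respect to the parametrization Φ^w(e,j,k) = (σ^j, 0, τσ^{−j}k).) -/
open MeasureTheory Real Set
open scoped ENNReal NNReal

noncomputable section

namespace AlphaMolecules

/-- the analyst's bracket `⟨x⟩ = (1+x²)^{1/2}` -/
def brak (x : ℝ) : ℝ := Real.sqrt (1 + x ^ 2)

/-- the Euclidean norm on `ℝ × ℝ` -/
def nrm (ξ : ℝ × ℝ) : ℝ := Real.sqrt (ξ.1 ^ 2 + ξ.2 ^ 2)

/-- rotation `R_θ` by the angle `θ` -/
def rot (θ : ℝ) (v : ℝ × ℝ) : ℝ × ℝ :=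
  (Real.cos θ * v.1 - Real.sin θ * v.2, Real.sin θ * v.1 + Real.cos θ * v.2)

/-- the α-scaling matrix `A_{α,s} = diag(s, s^α)` acting on `ℝ × ℝ` -/
def ascale (α s : ℝ) (v : ℝ × ℝ) : ℝ × ℝ := (s * v.1, s ^ α * v.2)

/-- the 2-dimensional Fourier transform `ĝ(ξ) = ∫ g(x) e^{-2πi x·ξ} dx` -/
def ft2 (g : ℝ × ℝ → ℂ) (ξ : ℝ × ℝ) : ℂ :=
  ∫ x : ℝ × ℝ, Complex.exp (-2 * Real.pi * Complex.I * (x.1 * ξ.1 + x.2 * ξ.2)) * g x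

/-- partial derivative in the first coordinate -/
def pd1 (f : ℝ × ℝ → ℂ) : ℝ × ℝ → ℂ := fun x => fderiv ℝ f x (1, 0)

/-- partial derivative in the second coordinate -/
def pd2 (f : ℝ × ℝ → ℂ) : ℝ × ℝ → ℂ := fun x => fderiv ℝ f x (0, 1)

/-- the iterated partial derivative `∂^ρ` for a multi-index `ρ = (ρ₁, ρ₂)` -/
def pd (ρ : ℕ × ℕ) (f : ℝ × ℝ → ℂ) : ℝ × ℝ → ℂ := pd1^[ρ.1] (pd2^[ρ.2] f)

/-- `g` satisfies the α-molecule condition at scale `s` with constant `C`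
and order `(L, M, N₁, N₂)`. -/
def MoleculeCond (α s C : ℝ) (L : ℕ) (M N₁ N₂ : ℝ) (g : ℝ × ℝ → ℂ) : Prop :=
  ContDiff ℝ L (ft2 g) ∧
  ∀ ρ : ℕ × ℕ, ρ.1 + ρ.2 ≤ L → ∀ ξ : ℝ × ℝ,
    ‖pd ρ (ft2 g) ξ‖ ≤
      C * (min 1 (s⁻¹ + |ξ.1| + s ^ (-(1 - α)) * |ξ.2|)) ^ M
        * brak (nrm ξ) ^ (-N₁) * brak ξ.2 ^ (-N₂)

/-- the α-molecule `m(x) = s^{(1+α)/2} g(A_{α,s} R_θ (x - x₀))` -/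
def mol (α s θ : ℝ) (x₀ : ℝ × ℝ) (g : ℝ × ℝ → ℂ) : ℝ × ℝ → ℂ :=
  fun x => ((s ^ ((1 + α) / 2) : ℝ) : ℂ) * g (ascale α s (rot θ (x - x₀)))

/-- distance between two angles modulo `π` -/
def angDist (a b : ℝ) : ℝ := ⨅ n : ℤ, |a - b + n * Real.pi|

/-- the quantity `d_α` between two points of the parameter space `ℙ = ℝ₊ × 𝕋 × ℝ²` -/
def dAlpha (α : ℝ) (p q : ℝ × ℝ × (ℝ × ℝ)) : ℝ :=
  (min p.1 q.1) ^ (2 * (1 - α)) * angDist p.2.1 q.2.1 ^ 2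
    + (min p.1 q.1) ^ (2 * α) * ((p.2.2.1 - q.2.2.1) ^ 2 + (p.2.2.2 - q.2.2.2) ^ 2)
    + (min p.1 q.1) ^ (2 : ℝ)
        / (1 + (min p.1 q.1) ^ (2 * (1 - α)) * angDist p.2.1 q.2.1 ^ 2)
        * (Real.cos p.2.1 * (p.2.2.1 - q.2.2.1) - Real.sin p.2.1 * (p.2.2.2 - q.2.2.2)) ^ 2

/-- the α-scaled index distance `ω_α` -/
def omegaAlpha (α : ℝ) (p q : ℝ × ℝ × (ℝ × ℝ)) : ℝ :=
  max (p.1 / q.1) (q.1 / p.1) * (1 + dAlpha α p q)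

/-- the `L²(ℝ²)` inner product `⟨f, g⟩ = ∫ f ḡ` -/
def innerL2 (f g : ℝ × ℝ → ℂ) : ℂ := ∫ x : ℝ × ℝ, f x * (starRingEnd ℂ) (g x)

end AlphaMolecules

namespace AlphaMolecules

/-- the 1-dimensional Fourier transform `φ̂(ξ) = ∫ φ(x) e^{-2πixξ} dx` -/
def ft1 (g : ℝ → ℂ) (ξ : ℝ) : ℂ :=
  ∫ x : ℝ, Complex.exp (-2 * Real.pi * Complex.I * (x * ξ)) * g x

/-- tensor product of two univariate functions -/
def tensor (f g : ℝ → ℂ) : ℝ × ℝ → ℂ := fun x => f x.1 * g x.2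

end AlphaMolecules

open AlphaMolecules

/-! The Fourier transform of a tensor product is the tensor product of the Fourier transforms,
so `∂^ρ ψ̂^e (ξ) = (φ̂^{e₁})^{(ρ₁)} (ξ₁) · (φ̂^{e₂})^{(ρ₂)} (ξ₂)`. This is bounded, and it vanishes
unless `ξ` lies in the square `[-R, R]²` with `R = max a c`, where both brackets are bounded.
When `e ≠ (0,0)` it also vanishes unless `|ξ₁| ≥ b` or `|ξ₂| ≥ b`, because `φ̂¹` and all its
derivatives vanish on `(-b, b)`; when `e = (0,0)` we have `σ^{-j} = 1`. Either way the weight on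
the right-hand side is bounded below by a positive constant on the support, uniformly in `j`
and `σ`. -/

open Function

namespace AlphaMolecules

theorem ft2_tensor (f g : ℝ → ℂ) : ft2 (tensor f g) = tensor (ft1 f) (ft1 g) := by
  funext ξ
  unfold ft2 ft1 tensor
  rw [Measure.volume_eq_prod, ← integral_prod_mul]
  congr 1 with x
  rw [show -2 * (π : ℂ) * Complex.I * (x.1 * ξ.1 + x.2 * ξ.2) =
      -2 * π * Complex.I * (x.1 * ξ.1) + -2 * π * Complex.I * (x.2 * ξ.2) by ring,
    Complex.exp_add]
  ring

section PartialDerivatives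

variable {u v : ℝ → ℂ}

theorem hasFDerivAt_tensor (hu : Differentiable ℝ u) (hv : Differentiable ℝ v) (ξ : ℝ × ℝ) :
    HasFDerivAt (tensor u v)
      (u ξ.1 • (fderiv ℝ v ξ.2).comp (ContinuousLinearMap.snd ℝ ℝ ℝ) +
        v ξ.2 • (fderiv ℝ u ξ.1).comp (ContinuousLinearMap.fst ℝ ℝ ℝ)) ξ :=
  ((hu ξ.1).hasFDerivAt.comp ξ hasFDerivAt_fst).mul ((hv ξ.2).hasFDerivAt.comp ξ hasFDerivAt_snd)

theorem pd1_tensor (hu : Differentiable ℝ u) (hv : Differentiable ℝ v) :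
    pd1 (tensor u v) = tensor (deriv u) v := by
  funext ξ
  simp [pd1, tensor, (hasFDerivAt_tensor hu hv ξ).fderiv, ← toSpanSingleton_deriv, mul_comm]

theorem pd2_tensor (hu : Differentiable ℝ u) (hv : Differentiable ℝ v) :
    pd2 (tensor u v) = tensor u (deriv v) := by
  funext ξ
  simp [pd2, tensor, (hasFDerivAt_tensor hu hv ξ).fderiv, ← toSpanSingleton_deriv]

theorem pd1_iterate_tensor {n : ℕ} (hu : ContDiff ℝ n u) (hv : ContDiff ℝ n v) :
    pd1^[n] (tensor u v) = tensor (iteratedDeriv n u) v := by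
  induction n with
  | zero => simp
  | succ n ih =>
    rw [iterate_succ_apply', ih (hu.of_le (mod_cast n.le_succ)) (hv.of_le (mod_cast n.le_succ)),
      pd1_tensor (hu.differentiable_iteratedDeriv n (mod_cast n.lt_succ_self))
        (hv.differentiable (by simp)),
      ← iteratedDeriv_succ]

theorem pd2_iterate_tensor {n : ℕ} (hu : ContDiff ℝ n u) (hv : ContDiff ℝ n v) :
    pd2^[n] (tensor u v) = tensor u (iteratedDeriv n v) := by
  induction n with
  | zero => simp
  | succ n ih =>
    rw [iterate_succ_apply', ih (hu.of_le (mod_cast n.le_succ)) (hv.of_le (mod_cast n.le_succ)),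
      pd2_tensor (hu.differentiable (by simp))
        (hv.differentiable_iteratedDeriv n (mod_cast n.lt_succ_self)),
      ← iteratedDeriv_succ]

theorem pd_tensor {L : ℕ} (hu : ContDiff ℝ L u) (hv : ContDiff ℝ L v) {ρ : ℕ × ℕ}
    (hρ : ρ.1 + ρ.2 ≤ L) :
    pd ρ (tensor u v) = tensor (iteratedDeriv ρ.1 u) (iteratedDeriv ρ.2 v) := by
  have hv' : ContDiff ℝ ρ.1 (iteratedDeriv ρ.2 v) := by
    rw [iteratedDeriv_eq_iterate]
    exact ContDiff.iterate_deriv' _ _ (hv.of_le (mod_cast hρ))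
  rw [pd, pd2_iterate_tensor (hu.of_le (mod_cast (le_add_self.trans hρ)))
      (hv.of_le (mod_cast (le_add_self.trans hρ))),
    pd1_iterate_tensor (hu.of_le (mod_cast (le_self_add.trans hρ))) hv']

end PartialDerivatives

section IteratedDerivatives

variable {𝕜 F : Type*} [NontriviallyNormedField 𝕜] [NormedAddCommGroup F] [NormedSpace 𝕜 F]
  {f : 𝕜 → F}

theorem support_iteratedDeriv_subset (n : ℕ) : support (iteratedDeriv n f) ⊆ tsupport f := by
  intro x hx
  apply support_iteratedFDeriv_subset (𝕜 := 𝕜) n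
  rw [mem_support] at hx ⊢
  rwa [← norm_ne_zero_iff, norm_iteratedFDeriv_eq_norm_iteratedDeriv, norm_ne_zero_iff]

theorem support_iteratedDeriv_subset_of_isClosed {K : Set 𝕜} (hK : IsClosed K)
    (hf : support f ⊆ K) (n : ℕ) : support (iteratedDeriv n f) ⊆ K :=
  (support_iteratedDeriv_subset n).trans (closure_minimal hf hK)

theorem exists_norm_iteratedDeriv_le {L : ℕ} (hf : ContDiff 𝕜 L f) (hcs : HasCompactSupport f) :
    ∃ B, ∀ m ≤ L, ∀ x, ‖iteratedDeriv m f x‖ ≤ B := by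
  have hbdd : BddAbove (⋃ m ∈ Iic L, range fun x => ‖iteratedDeriv m f x‖) :=
    (finite_Iic L).bddAbove_biUnion.2 fun m hm =>
      (hf.continuous_iteratedDeriv m (mod_cast hm)).norm.bddAbove_range_of_hasCompactSupport
        (hcs.mono' (support_iteratedDeriv_subset m)).norm
  obtain ⟨B, hB⟩ := hbdd
  exact ⟨B, fun m hm x => hB (mem_biUnion (mem_Iic.2 hm) (mem_range_self x))⟩

theorem exists_pos_norm_iteratedDeriv_le {ι : Type*} [Finite ι] {L : ℕ} {f : ι → 𝕜 → F}
    (hf : ∀ i, ContDiff 𝕜 L (f i)) (hcs : ∀ i, HasCompactSupport (f i)) :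
    ∃ B > 0, ∀ i, ∀ m ≤ L, ∀ x, ‖iteratedDeriv m (f i) x‖ ≤ B := by
  choose B hB using fun i => exists_norm_iteratedDeriv_le (hf i) (hcs i)
  obtain ⟨B', hB'⟩ := Finite.exists_le B
  exact ⟨max B' 1, by positivity,
    fun i m hm x => (hB i m hm x).trans ((hB' i).trans (le_max_left _ _))⟩

end IteratedDerivatives

section RealLine

variable {F : Type*} [NormedAddCommGroup F] [NormedSpace ℝ F] {w : ℝ → F} {k : ℕ} {x : ℝ}

theorem abs_le_of_iteratedDeriv_ne_zero {R : ℝ} (hw : support w ⊆ Icc (-R) R)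
    (hx : iteratedDeriv k w x ≠ 0) : |x| ≤ R :=
  abs_le.2 (support_iteratedDeriv_subset_of_isClosed isClosed_Icc hw k hx)

theorem le_abs_of_iteratedDeriv_ne_zero {b : ℝ} (hw : support w ⊆ (Ioo (-b) b)ᶜ)
    (hx : iteratedDeriv k w x ≠ 0) : b ≤ |x| :=
  le_of_not_gt fun h =>
    support_iteratedDeriv_subset_of_isClosed isOpen_Ioo.isClosed_compl hw k hx (abs_lt.1 h)

end RealLine

section Weights

theorem brak_pos (x : ℝ) : 0 < brak x :=
  Real.sqrt_pos.2 (by positivity)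

theorem brak_le_brak {x y : ℝ} (h : |x| ≤ |y|) : brak x ≤ brak y :=
  Real.sqrt_le_sqrt (by nlinarith [sq_le_sq.2 h])

theorem nrm_le_nrm {ξ η : ℝ × ℝ} (h₁ : |ξ.1| ≤ |η.1|) (h₂ : |ξ.2| ≤ |η.2|) : nrm ξ ≤ nrm η :=
  Real.sqrt_le_sqrt (by nlinarith [sq_le_sq.2 h₁, sq_le_sq.2 h₂])

def moleculeWeight (t M N₁ N₂ : ℝ) (ξ : ℝ × ℝ) : ℝ :=
  min 1 (t + |ξ.1| + |ξ.2|) ^ M * brak (nrm ξ) ^ (-N₁) * brak ξ.2 ^ (-N₂)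

variable {t M N₁ N₂ : ℝ}

theorem moleculeWeight_nonneg (ht : 0 ≤ t) (ξ : ℝ × ℝ) : 0 ≤ moleculeWeight t M N₁ N₂ ξ :=
  mul_nonneg (mul_nonneg (Real.rpow_nonneg (le_min zero_le_one (by positivity)) _)
    (Real.rpow_nonneg (brak_pos _).le _)) (Real.rpow_nonneg (brak_pos _).le _)

theorem le_moleculeWeight {b R : ℝ} (hM : 0 ≤ M) (hN₁ : 0 ≤ N₁) (hN₂ : 0 ≤ N₂) (hb : 0 < b)
    {ξ : ℝ × ℝ} (h₁ : |ξ.1| ≤ R) (h₂ : |ξ.2| ≤ R)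
    (hξ : 1 ≤ t + |ξ.1| + |ξ.2| ∨ b ≤ t + |ξ.1| + |ξ.2|) :
    min 1 b ^ M * brak (nrm (R, R)) ^ (-N₁) * brak R ^ (-N₂) ≤ moleculeWeight t M N₁ N₂ ξ := by
  have hmin : min 1 b ≤ min 1 (t + |ξ.1| + |ξ.2|) := by
    rcases hξ with h | h
    · exact le_min (min_le_left _ _) ((min_le_left _ _).trans h)
    · exact min_le_min_left _ h
  have hμ : 0 < min 1 b := lt_min one_pos hb
  have hR : |ξ.2| ≤ |R| := h₂.trans (le_abs_self R)
  have hnrm : |nrm ξ| ≤ |nrm (R, R)| :=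
    abs_le_abs_of_nonneg (Real.sqrt_nonneg _) (nrm_le_nrm (h₁.trans (le_abs_self R)) hR)
  have hbrak {x : ℝ} {N : ℝ} : 0 ≤ brak x ^ N := Real.rpow_nonneg (brak_pos x).le N
  refine mul_le_mul (mul_le_mul (Real.rpow_le_rpow hμ.le hmin hM) ?_ hbrak ?_) ?_ hbrak ?_
  · exact Real.rpow_le_rpow_of_nonpos (brak_pos _) (brak_le_brak hnrm) (neg_nonpos.2 hN₁)
  · exact Real.rpow_nonneg (hμ.le.trans hmin) M
  · exact Real.rpow_le_rpow_of_nonpos (brak_pos _) (brak_le_brak hR) (neg_nonpos.2 hN₂)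
  · exact mul_nonneg (Real.rpow_nonneg (hμ.le.trans hmin) M) hbrak

theorem exists_norm_le_mul_moleculeWeight {E : Type*} [NormedAddCommGroup E] {b R B : ℝ}
    (hM : 0 ≤ M) (hN₁ : 0 ≤ N₁) (hN₂ : 0 ≤ N₂) (hb : 0 < b) (hB : 0 < B) :
    ∃ C > 0, ∀ (t : ℝ) (F : ℝ × ℝ → E), 0 ≤ t → (∀ ξ, ‖F ξ‖ ≤ B) →
      (∀ ξ, F ξ ≠ 0 →
        |ξ.1| ≤ R ∧ |ξ.2| ≤ R ∧ (1 ≤ t + |ξ.1| + |ξ.2| ∨ b ≤ t + |ξ.1| + |ξ.2|)) →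
      ∀ ξ, ‖F ξ‖ ≤ C * moleculeWeight t M N₁ N₂ ξ := by
  set κ := min 1 b ^ M * brak (nrm (R, R)) ^ (-N₁) * brak R ^ (-N₂)
  have hκ : 0 < κ := mul_pos (mul_pos (Real.rpow_pos_of_pos (lt_min one_pos hb) _)
    (Real.rpow_pos_of_pos (brak_pos _) _)) (Real.rpow_pos_of_pos (brak_pos _) _)
  refine ⟨B / κ, by positivity, fun t F ht hFB hF ξ => ?_⟩
  by_cases hξ : F ξ = 0
  · rw [hξ, norm_zero]
    exact mul_nonneg (by positivity) (moleculeWeight_nonneg ht ξ)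
  obtain ⟨h₁, h₂, hs⟩ := hF ξ hξ
  calc ‖F ξ‖ ≤ B := hFB ξ
    _ = B / κ * κ := by field_simp
    _ ≤ B / κ * moleculeWeight t M N₁ N₂ ξ := by
      gcongr
      exact le_moleculeWeight hM hN₁ hN₂ hb h₁ h₂ hs

end Weights

end AlphaMolecules

theorem stmt13_general (L : ℕ) (a b c : ℝ) (hb : 0 < b)
    (φ0 φ1 : ℝ → ℂ)
    (h0smooth : ContDiff ℝ L (ft1 φ0)) (h1smooth : ContDiff ℝ L (ft1 φ1))
    (h0supp : Function.support (ft1 φ0) ⊆ Set.Icc (-a) a)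
    (h1supp : Function.support (ft1 φ1) ⊆ Set.Icc (-c) c \ Set.Ioo (-b) b) :
    ∀ M N₁ N₂ : ℕ, ∃ C > (0 : ℝ),
      ∀ (e : Bool × Bool) (j : ℕ), (e = (false, false) → j = 0) →
      ∀ σ : ℝ, 1 < σ → ∀ ρ : ℕ × ℕ, ρ.1 + ρ.2 ≤ L → ∀ ξ : ℝ × ℝ,
        ‖pd ρ (ft2 (tensor (if e.1 then φ1 else φ0) (if e.2 then φ1 else φ0))) ξ‖
          ≤ C * (min 1 (σ ^ (-(j : ℝ)) + |ξ.1| + |ξ.2|)) ^ (M : ℝ)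
              * brak (nrm ξ) ^ (-(N₁ : ℝ)) * brak ξ.2 ^ (-(N₂ : ℝ)) := by
  intro M N₁ N₂
  let φ (i : Bool) : ℝ → ℂ := if i then φ1 else φ0
  set R := max a c
  have hsmooth (i : Bool) : ContDiff ℝ L (ft1 (φ i)) := by cases i <;> assumption
  have hsupp (i : Bool) : support (ft1 (φ i)) ⊆ Icc (-R) R := by
    have hIcc {r : ℝ} (hr : r ≤ R) : Icc (-r) r ⊆ Icc (-R) R := Icc_subset_Icc (by linarith) hr
    cases i
    · exact h0supp.trans (hIcc (le_max_left a c))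
    · exact h1supp.trans (sdiff_subset.trans (hIcc (le_max_right a c)))
  have hgap : support (ft1 (φ true)) ⊆ (Ioo (-b) b)ᶜ := h1supp.trans (sdiff_subset_compl _ _)
  obtain ⟨B, hB0, hB⟩ := exists_pos_norm_iteratedDeriv_le hsmooth
    fun i => .of_support_subset_isCompact isCompact_Icc (hsupp i)
  obtain ⟨C, hC, hCF⟩ := exists_norm_le_mul_moleculeWeight (E := ℂ) (R := R)
    (M.cast_nonneg : (0 : ℝ) ≤ M) N₁.cast_nonneg N₂.cast_nonneg hb (pow_pos hB0 2)
  refine ⟨C, hC, fun e j hj σ hσ ρ hρ ξ => ?_⟩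
  change ‖pd ρ (ft2 (tensor (φ e.1) (φ e.2))) ξ‖ ≤ _
  rw [ft2_tensor, pd_tensor (hsmooth _) (hsmooth _) hρ]
  have hσj : 0 < σ ^ (-(j : ℝ)) := Real.rpow_pos_of_pos (by linarith) _
  refine (hCF _ _ hσj.le (fun η => ?_) (fun η hη => ?_) ξ).trans_eq
    (by simp only [moleculeWeight, mul_assoc])
  · exact (norm_mul_le _ _).trans ((mul_le_mul (hB _ _ (by omega) _) (hB _ _ (by omega) _)
      (norm_nonneg _) hB0.le).trans_eq (sq B).symm)
  obtain ⟨h₁, h₂⟩ := mul_ne_zero_iff.1 hη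
  refine ⟨abs_le_of_iteratedDeriv_ne_zero (hsupp _) h₁,
    abs_le_of_iteratedDeriv_ne_zero (hsupp _) h₂, ?_⟩
  rcases e with ⟨_ | _, _ | _⟩
  · left
    simp only [hj rfl, CharP.cast_eq_zero, neg_zero, Real.rpow_zero]
    linarith [abs_nonneg η.1, abs_nonneg η.2]
  · exact Or.inr (by linarith [le_abs_of_iteratedDeriv_ne_zero hgap h₂, abs_nonneg η.1])
  · exact Or.inr (by linarith [le_abs_of_iteratedDeriv_ne_zero hgap h₁, abs_nonneg η.2])
  · exact Or.inr (by linarith [le_abs_of_iteratedDeriv_ne_zero hgap h₁, abs_nonneg η.2])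

/-- Proposition 3.1: a Lemarié–Meyer type wavelet system built from
band-limited generators `φ⁰, φ¹` is a system of `1`-molecules of order `(L, ∞, ∞, ∞)`:
for every `M, N₁, N₂` there is a constant `C` such that the generators
`ψ^e = φ^{e₁} ⊗ φ^{e₂}` satisfy the molecule estimate at every scale `σ^j`
(with `j = 0` in the coarse-scale case `e = (0,0)`). -/
theorem stmt13 (L : ℕ) (a b c : ℝ) (ha : 0 < a) (hb : 0 < b) (hbc : b < c)
    (φ0 φ1 : ℝ → ℂ)
    (h0L2 : MemLp φ0 2 (volume : Measure ℝ)) (h1L2 : MemLp φ1 2 (volume : Measure ℝ))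
    (h0smooth : ContDiff ℝ L (ft1 φ0)) (h1smooth : ContDiff ℝ L (ft1 φ1))
    (h0supp : Function.support (ft1 φ0) ⊆ Set.Icc (-a) a)
    (h1supp : Function.support (ft1 φ1) ⊆ Set.Icc (-c) c \ Set.Ioo (-b) b) :
    ∀ M N₁ N₂ : ℕ, ∃ C > (0 : ℝ),
      ∀ (e : Bool × Bool) (j : ℕ), (e = (false, false) → j = 0) →
      ∀ σ : ℝ, 1 < σ → ∀ ρ : ℕ × ℕ, ρ.1 + ρ.2 ≤ L → ∀ ξ : ℝ × ℝ,
        ‖pd ρ (ft2 (tensor (if e.1 then φ1 else φ0) (if e.2 then φ1 else φ0))) ξ‖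
          ≤ C * (min 1 (σ ^ (-(j : ℝ)) + |ξ.1| + |ξ.2|)) ^ (M : ℝ)
              * brak (nrm ξ) ^ (-(N₁ : ℝ)) * brak ξ.2 ^ (-(N₂ : ℝ)) :=
  stmt13_general L a b c hb φ0 φ1 h0smooth h1smooth h0supp h1supp
end
end

section
/- Let α ∈ [0,1]. There exists an absolute constant C > 0 such that for all s > 0, all r ≥ 0 and all u ∈ [0,1]: min{1, s^{−1}(1+r)} / (1 + s^{−α} r u) ≤ C · (1 + s^{1−α} u)^{−1}. -/
/-!
Write `A = s^{-α}`, `B = s^{1-α} = s A` and `m = min{1, s⁻¹(1+r)}`. Since `m ≤ 1`, it suffices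
that `m B u ≤ 1 + A r u`, and then `C = 2` works. For `s ≤ 1` this holds because `m`, `B`, `u` are
all at most `1`; for `s ≥ 1` the bound `m ≤ s⁻¹(1+r)` gives `m B u ≤ (1+r) A u ≤ 1 + A r u`,
as `A u ≤ 1`.
-/

open Real Set

lemma div_one_add_le_two_mul_inv {m x y : ℝ} (hm : m ≤ 1) (hx : 0 ≤ x) (hy : 0 ≤ y)
    (h : m * y ≤ 1 + x) : m / (1 + x) ≤ 2 * (1 + y)⁻¹ := by
  rw [← div_eq_mul_inv, div_le_div_iff₀ (by positivity) (by positivity)]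
  linarith

lemma rpow_one_sub_eq_mul_rpow_neg {s : ℝ} (hs : 0 < s) (α : ℝ) :
    s ^ (1 - α) = s * s ^ (-α) := by
  rw [sub_eq_add_neg, rpow_add hs, rpow_one]

lemma min_one_mul_rpow_one_sub_le_of_le_one {α s r u : ℝ} (hα : α ≤ 1) (hs : 0 < s)
    (hs₁ : s ≤ 1) (hr : 0 ≤ r) (hu : u ∈ Icc (0 : ℝ) 1) :
    min 1 (s⁻¹ * (1 + r)) * (s ^ (1 - α) * u) ≤ 1 + s ^ (-α) * r * u := by
  have hu₀ := hu.1
  have hB : s ^ (1 - α) ≤ 1 := rpow_le_one hs.le hs₁ (by linarith)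
  have hBu : s ^ (1 - α) * u ≤ 1 := mul_le_one₀ hB hu.1 hu.2
  have hmBu : min 1 (s⁻¹ * (1 + r)) * (s ^ (1 - α) * u) ≤ 1 :=
    mul_le_one₀ (min_le_left _ _) (by positivity) hBu
  have : 0 ≤ s ^ (-α) * r * u := by positivity
  linarith

lemma min_one_mul_rpow_one_sub_le_of_one_le {α s r u : ℝ} (hα : 0 ≤ α) (hs₁ : 1 ≤ s)
    (hr : 0 ≤ r) (hu : u ∈ Icc (0 : ℝ) 1) :
    min 1 (s⁻¹ * (1 + r)) * (s ^ (1 - α) * u) ≤ 1 + s ^ (-α) * r * u := by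
  have hs : 0 < s := by linarith
  have hA : s ^ (-α) ≤ 1 := rpow_le_one_of_one_le_of_nonpos hs₁ (by linarith)
  have hAu : s ^ (-α) * u ≤ 1 := mul_le_one₀ hA hu.1 hu.2
  calc min 1 (s⁻¹ * (1 + r)) * (s ^ (1 - α) * u)
      ≤ s⁻¹ * (1 + r) * (s ^ (1 - α) * u) := by
        gcongr
        · have := hu.1; positivity
        · exact min_le_right _ _
    _ = s ^ (-α) * u + s ^ (-α) * r * u := by
        rw [rpow_one_sub_eq_mul_rpow_neg hs]
        field_simp
    _ ≤ 1 + s ^ (-α) * r * u := by linarith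

/-- there is an absolute constant `C > 0` such that for all
`α ∈ [0,1]`, `s > 0`, `r ≥ 0` and `u ∈ [0,1]`:
`min{1, s⁻¹(1+r)} / (1 + s^{-α} r u) ≤ C (1 + s^{1-α} u)⁻¹`. -/
theorem stmt19 :
    ∃ C > (0 : ℝ), ∀ α ∈ Set.Icc (0 : ℝ) 1, ∀ s r u : ℝ,
      0 < s → 0 ≤ r → u ∈ Set.Icc (0 : ℝ) 1 →
      min 1 (s⁻¹ * (1 + r)) / (1 + s ^ (-α) * r * u) ≤ C * (1 + s ^ (1 - α) * u)⁻¹ := by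
  refine ⟨2, two_pos, ?_⟩
  rintro α ⟨hα₀, hα₁⟩ s r u hs hr hu
  have key : min 1 (s⁻¹ * (1 + r)) * (s ^ (1 - α) * u) ≤ 1 + s ^ (-α) * r * u := by
    rcases le_total s 1 with hs₁ | hs₁
    · exact min_one_mul_rpow_one_sub_le_of_le_one hα₁ hs hs₁ hr hu
    · exact min_one_mul_rpow_one_sub_le_of_one_le hα₀ hs₁ hr hu
  have hu₀ := hu.1
  exact div_one_add_le_two_mul_inv (min_le_left _ _) (by positivity) (by positivity) key
end
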